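/- arXiv:0707.4029 — 2 statements merged into one kernel-verified Lean document; each statement's English description precedes it below -/
import Mathlib

section
/- In B₂, with e₁₂ = (e₁e₂ - q e₂e₁)/(q⁻¹-q) and ẽ₁₂ = (e₂e₁ - q e₁e₂)/(q⁻¹-q), one has the commutation relation e₁₂ ẽ₁₂ = ẽ₁₂ e₁₂, i.e. e₁₂ and ẽ₁₂ commute. -/
/-! Multiplying the second Serre relation by `e₁` on the left and the first by `e₂` on the right
gives two expressions for `e₁e₂e₁e₂`, whence `e₁e₂²e₁ = e₂e₁²e₂`: the elements `e₁e₂` and `e₂e₁`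
commute. Both `e₁₂` and `ẽ₁₂` are linear combinations of these two commuting elements. -/

section

variable {R A : Type*} [CommRing R] [Ring A] [Algebra R A]

theorem commute_mul_mul_of_serre (c : R) {e₁ e₂ : A}
    (serre₁ : e₁ ^ 2 * e₂ + e₂ * e₁ ^ 2 = c • (e₁ * e₂ * e₁))
    (serre₂ : e₂ ^ 2 * e₁ + e₁ * e₂ ^ 2 = c • (e₂ * e₁ * e₂)) :
    Commute (e₁ * e₂) (e₂ * e₁) := by
  have key : e₁ * e₂ ^ 2 * e₁ + e₁ ^ 2 * e₂ ^ 2 = e₂ * e₁ ^ 2 * e₂ + e₁ ^ 2 * e₂ ^ 2 :=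
    calc e₁ * e₂ ^ 2 * e₁ + e₁ ^ 2 * e₂ ^ 2 = e₁ * (e₂ ^ 2 * e₁ + e₁ * e₂ ^ 2) := by noncomm_ring
      _ = (e₁ ^ 2 * e₂ + e₂ * e₁ ^ 2) * e₂ := by
        rw [serre₁, serre₂, mul_smul_comm, smul_mul_assoc]; noncomm_ring
      _ = e₂ * e₁ ^ 2 * e₂ + e₁ ^ 2 * e₂ ^ 2 := by noncomm_ring
  calc e₁ * e₂ * (e₂ * e₁) = e₁ * e₂ ^ 2 * e₁ := by noncomm_ring
    _ = e₂ * e₁ ^ 2 * e₂ := add_right_cancel key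
    _ = e₂ * e₁ * (e₁ * e₂) := by noncomm_ring

theorem Commute.sub_smul_sub_smul {x y : A} (h : Commute x y) (a b : R) :
    Commute (x - a • y) (y - b • x) :=
  ((h.sub_right ((Commute.refl x).smul_right b)).sub_left
    (((Commute.refl y).sub_right (h.symm.smul_right b)).smul_left a))

end

theorem serre_e12_et12_comm_general {K : Type*} [Field K] {A : Type*} [Ring A] [Algebra K A]
    (q : K) (e₁ e₂ : A)
    (serre₁ : e₁ ^ 2 * e₂ + e₂ * e₁ ^ 2 = (q⁻¹ + q) • (e₁ * e₂ * e₁))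
    (serre₂ : e₂ ^ 2 * e₁ + e₁ * e₂ ^ 2 = (q⁻¹ + q) • (e₂ * e₁ * e₂)) :
    let e₁₂ : A := (q⁻¹ - q)⁻¹ • (e₁ * e₂ - q • (e₂ * e₁))
    let et₁₂ : A := (q⁻¹ - q)⁻¹ • (e₂ * e₁ - q • (e₁ * e₂))
    e₁₂ * et₁₂ = et₁₂ * e₁₂ :=
  (((commute_mul_mul_of_serre _ serre₁ serre₂).sub_smul_sub_smul q q).smul_left _).smul_right _

/-- In the algebra `B₂` generated by `e₁, e₂` subject to the `q`-Serre relations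
(equivalently, for any elements of any `K`-algebra satisfying them), with
`e₁₂ = (e₁e₂ - q e₂e₁)/(q⁻¹ - q)` and `ẽ₁₂ = (e₂e₁ - q e₁e₂)/(q⁻¹ - q)`: -/
theorem serre_e12_et12_comm {K : Type*} [Field K] {A : Type*} [Ring A] [Algebra K A]
    (q : K) (hq : q ≠ 0) (hq' : q⁻¹ - q ≠ 0) (e₁ e₂ : A)
    (serre₁ : e₁ ^ 2 * e₂ + e₂ * e₁ ^ 2 = (q⁻¹ + q) • (e₁ * e₂ * e₁))
    (serre₂ : e₂ ^ 2 * e₁ + e₁ * e₂ ^ 2 = (q⁻¹ + q) • (e₂ * e₁ * e₂)) :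
    let e₁₂ : A := (q⁻¹ - q)⁻¹ • (e₁ * e₂ - q • (e₂ * e₁))
    let et₁₂ : A := (q⁻¹ - q)⁻¹ • (e₂ * e₁ - q • (e₁ * e₂))
    e₁₂ * et₁₂ = et₁₂ * e₁₂ :=
  serre_e12_et12_comm_general q e₁ e₂ serre₁ serre₂
end

section
/- In B₂, the identity e₁ ẽ₁₂^{m₂} e₂^{m₃} = q^{m₂}[m₃] ẽ₁₂^{m₂} e₂^{m₃-1} e₁₂ + q^{m₂+m₃} ẽ₁₂^{m₂} e₂^{m₃} e₁ holds for all m₂ ≥ 0 and m₃ ≥ 1, where [n] = q^{-n} - q^n. -/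
/-
Both Serre relations are q-commutation rules. The one for e₁ says e₁ ẽ₁₂ = q ẽ₁₂ e₁, so e₁ passes
through ẽ₁₂^{m₂} at the cost of q^{m₂}. The one for e₂ says e₁₂ e₂ = q⁻¹ e₂ e₁₂. Passing e₁
through e₂ one factor at a time via e₁ e₂ = (q⁻¹ - q) e₁₂ + q e₂ e₁, and pushing each e₁₂ that
appears to the right end with a factor q⁻¹, the coefficients of e₂^{n} e₁₂ obey
[n + 1] = q⁻¹ [n] + qⁿ (q⁻¹ - q), whose solution with [0] = 0 is [n] = q⁻ⁿ - qⁿ.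
-/

theorem mul_pow_of_mul_eq_smul {R A : Type*} [CommSemiring R] [Semiring A] [Algebra R A]
    {r : R} {a x : A} (h : a * x = r • (x * a)) (m : ℕ) :
    a * x ^ m = r ^ m • (x ^ m * a) := by
  induction m with
  | zero => simp
  | succ m ih =>
    rw [pow_succ, ← mul_assoc, ih, smul_mul_assoc, mul_assoc, h, mul_smul_comm, smul_smul,
      ← mul_assoc, pow_succ]

section QSerre

variable {K A : Type*} [Field K] [Ring A] [Algebra K A]

-- `qComm q e₁ e₂` is the paper's e₁₂ and `qComm q e₂ e₁` its ẽ₁₂.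
def qComm (q : K) (a b : A) : A := (q⁻¹ - q)⁻¹ • (a * b - q • (b * a))

-- The paper's [n].
def qInt (q : K) (n : ℕ) : K := q ^ (-(n : ℤ)) - q ^ (n : ℤ)

theorem qInt_succ (q : K) (n : ℕ) : qInt q (n + 1) = q⁻¹ * qInt q n + q ^ n * (q⁻¹ - q) := by
  simp only [qInt, zpow_neg, zpow_natCast, pow_succ, mul_inv]
  ring

theorem mul_eq_smul_qComm_add {q : K} (hq' : q⁻¹ - q ≠ 0) (a b : A) :
    a * b = (q⁻¹ - q) • qComm q a b + q • (b * a) := by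
  rw [qComm, smul_smul, mul_inv_cancel₀ hq', one_smul, sub_add_cancel]

theorem mul_qComm_of_serre {q : K} (hq : q ≠ 0) {a b : A}
    (h : a ^ 2 * b + b * a ^ 2 = (q⁻¹ + q) • (a * b * a)) :
    a * qComm q b a = q • (qComm q b a * a) := by
  rw [qComm, mul_smul_comm, smul_mul_assoc, smul_comm q]
  congr 1
  have h' : b * (a * a) = (q⁻¹ + q) • (a * (b * a)) - a * (a * b) := by
    rw [eq_sub_iff_add_eq, add_comm]
    simpa only [sq, mul_assoc] using h
  simp only [mul_sub, sub_mul, mul_smul_comm, smul_mul_assoc, smul_sub, smul_smul, mul_assoc, h']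
  match_scalars
  all_goals field_simp
  ring

theorem mul_pow_succ_eq_qInt_smul_add {q : K} {a b c : A}
    (hab : a * b = (q⁻¹ - q) • c + q • (b * a)) (hcb : c * b = q⁻¹ • (b * c)) (n : ℕ) :
    a * b ^ (n + 1) = qInt q (n + 1) • (b ^ n * c) + q ^ (n + 1) • (b ^ (n + 1) * a) := by
  induction n with
  | zero => simpa [qInt] using hab
  | succ n ih =>
    rw [pow_succ b (n + 1), ← mul_assoc, ih, add_mul, smul_mul_assoc, smul_mul_assoc, mul_assoc,
      hcb, mul_assoc, hab, qInt_succ q (n + 1)]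
    simp only [mul_add, smul_add, mul_smul_comm, smul_smul, ← mul_assoc, ← pow_succ, add_smul]
    match_scalars <;> ring

end QSerre

theorem serre_key_recursion {K : Type*} [Field K] {A : Type*} [Ring A] [Algebra K A]
    (q : K) (hq : q ≠ 0) (hq' : q⁻¹ - q ≠ 0) (e₁ e₂ : A)
    (serre₁ : e₁ ^ 2 * e₂ + e₂ * e₁ ^ 2 = (q⁻¹ + q) • (e₁ * e₂ * e₁))
    (serre₂ : e₂ ^ 2 * e₁ + e₁ * e₂ ^ 2 = (q⁻¹ + q) • (e₂ * e₁ * e₂)) :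
    let e₁₂ : A := (q⁻¹ - q)⁻¹ • (e₁ * e₂ - q • (e₂ * e₁))
    let et₁₂ : A := (q⁻¹ - q)⁻¹ • (e₂ * e₁ - q • (e₁ * e₂))
    ∀ (m₂ m₃ : ℕ), 1 ≤ m₃ →
      e₁ * et₁₂ ^ m₂ * e₂ ^ m₃ =
        (q ^ m₂ * (q ^ (-(m₃ : ℤ)) - q ^ (m₃ : ℤ))) • (et₁₂ ^ m₂ * e₂ ^ (m₃ - 1) * e₁₂)
          + q ^ (m₂ + m₃) • (et₁₂ ^ m₂ * e₂ ^ m₃ * e₁) := by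
  intro e₁₂ et₁₂ m₂ m₃ hm₃
  obtain ⟨n, rfl⟩ : ∃ n, m₃ = n + 1 := ⟨m₃ - 1, by omega⟩
  have he₁ : e₁ * et₁₂ = q • (et₁₂ * e₁) := mul_qComm_of_serre hq serre₁
  have he₁₂ : e₁₂ * e₂ = q⁻¹ • (e₂ * e₁₂) :=
    ((inv_smul_eq_iff₀ hq).2 (mul_qComm_of_serre hq serre₂)).symm
  have he₁pow : e₁ * e₂ ^ (n + 1) =
      qInt q (n + 1) • (e₂ ^ n * e₁₂) + q ^ (n + 1) • (e₂ ^ (n + 1) * e₁) :=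
    mul_pow_succ_eq_qInt_smul_add (mul_eq_smul_qComm_add hq' e₁ e₂) he₁₂ n
  rw [mul_pow_of_mul_eq_smul he₁, smul_mul_assoc, mul_assoc, he₁pow]
  simp only [mul_add, smul_add, mul_smul_comm, smul_smul, ← mul_assoc, ← pow_add, qInt,
    Nat.add_sub_cancel]
end
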